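/- Fix β > 1, n ∈ ℕ with n ≥ 1, and x ≥ 0. For the Wright operator applied to f(t) = t², one has the exact identity W_n^{(β)}(t²; x) = x²·φ(1,β+2;nx)/φ(1,β;nx) + (1+2β)·(x/n)·φ(1,β+1;nx)/φ(1,β;nx) + β²/n². -/
import Mathlib

noncomputable def wright (β z : ℝ) : ℝ :=
  ∑' k : ℕ, z ^ k / (k.factorial * Real.Gamma ((k : ℝ) + β))

noncomputable def W (β : ℝ) (n : ℕ) (f : ℝ → ℝ) (x : ℝ) : ℝ :=
  (wright β (n * x))⁻¹ *
    ∑' k : ℕ, f (((k : ℝ) + β) / n) * (n * x) ^ k / (k.factorial * Real.Gamma ((k : ℝ) + β))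

lemma gammaA_pos {β : ℝ} (hβ : 0 < β) (k : ℕ) : 0 < Real.Gamma ((k : ℝ) + β) :=
  Real.Gamma_pos_of_pos (by positivity)

/-- The key quadratic-weighted series is summable. -/
lemma key_summable {β z : ℝ} (hβ : 1 ≤ β) (hz : 0 ≤ z) :
    Summable (fun k : ℕ => ((k : ℝ) + β) ^ 2 * z ^ k / (k.factorial * Real.Gamma ((k : ℝ) + β))) := by
  have hβ0 : (0:ℝ) < β := lt_of_lt_of_le one_pos hβ
  apply summable_of_ratio_norm_eventually_le (r := 1/2) (by norm_num)
  filter_upwards [Filter.eventually_ge_atTop ⌈8*z⌉₊] with k hk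
  have hk8 : 8*z ≤ (k:ℝ) := le_trans (Nat.le_ceil _) (by exact_mod_cast hk)
  have hG : 0 < Real.Gamma ((k:ℝ) + β) := gammaA_pos hβ0 k
  have hG' : Real.Gamma (((k+1 : ℕ):ℝ) + β) = ((k:ℝ)+β) * Real.Gamma ((k:ℝ)+β) := by
    push_cast
    rw [show (k:ℝ) + 1 + β = ((k:ℝ) + β) + 1 by ring, Real.Gamma_add_one (by positivity)]
  have hfac : (0:ℝ) < k.factorial := by positivity
  have hfac' : ((k+1 : ℕ).factorial : ℝ) = ((k:ℝ)+1) * k.factorial := by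
    push_cast [Nat.factorial_succ]; ring
  have hzk : (0:ℝ) ≤ z ^ k := by positivity
  rw [Real.norm_eq_abs, Real.norm_eq_abs, abs_of_nonneg (by positivity), abs_of_nonneg (by positivity)]
  rw [hG', hfac', ← mul_div_assoc, div_le_div_iff₀ (by positivity) (by positivity)]
  have h1 : (1:ℝ) ≤ (k:ℝ) + β := by
    have : (0:ℝ) ≤ (k:ℝ) := Nat.cast_nonneg k
    linarith
  push_cast
  have hK0 : (0:ℝ) ≤ (k:ℝ)+β := le_trans zero_le_one h1
  have hb : ((k:ℝ)+1+β)^2 ≤ 4*((k:ℝ)+β)^2 := by nlinarith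
  have hc : 2 * ((k:ℝ)+1+β)^2 * z ≤ 8*((k:ℝ)+β)^2*z := by nlinarith
  have hd : 8*((k:ℝ)+β)^2*z ≤ ((k:ℝ)+1)*((k:ℝ)+β)^2 := by
    have h8 : 8*z ≤ (k:ℝ)+1 := by linarith
    nlinarith [sq_nonneg ((k:ℝ)+β)]
  have he : ((k:ℝ)+1)*((k:ℝ)+β)^2 ≤ ((k:ℝ)+1)*((k:ℝ)+β)^3 := by
    have : ((k:ℝ)+β)^2 ≤ ((k:ℝ)+β)^3 := by nlinarith
    have hk1 : (0:ℝ) ≤ (k:ℝ)+1 := by positivity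
    nlinarith
  have key : 2 * ((k:ℝ)+1+β)^2 * z ≤ ((k:ℝ)+1) * ((k:ℝ)+β)^3 := by linarith
  calc ((k:ℝ)+1+β)^2 * z^(k+1) * (k.factorial * Real.Gamma ((k:ℝ)+β))
      = (2 * ((k:ℝ)+1+β)^2 * z) * (z^k * (k.factorial * Real.Gamma ((k:ℝ)+β)) / 2) := by ring
    _ ≤ (((k:ℝ)+1) * ((k:ℝ)+β)^3) * (z^k * (k.factorial * Real.Gamma ((k:ℝ)+β)) / 2) := by
        apply mul_le_mul_of_nonneg_right key (by positivity)
    _ = 1/2 * (((k:ℝ)+β)^2 * z^k) * (((k:ℝ)+1) * (k.factorial) * (((k:ℝ)+β) * Real.Gamma ((k:ℝ)+β))) := by ring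

/-- Comparison: any nonnegative weight bounded by `(k+β)^2` gives a summable series. -/
lemma cmp_summable {β z : ℝ} (hβ : 1 ≤ β) (hz : 0 ≤ z) (c : ℕ → ℝ)
    (hc : ∀ k, 0 ≤ c k) (hle : ∀ k : ℕ, c k ≤ ((k : ℝ) + β) ^ 2) :
    Summable (fun k : ℕ => c k * z ^ k / (k.factorial * Real.Gamma ((k : ℝ) + β))) := by
  have hβ0 : (0:ℝ) < β := lt_of_lt_of_le one_pos hβ
  apply Summable.of_nonneg_of_le (fun k =>
      div_nonneg (mul_nonneg (hc k) (pow_nonneg hz k))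
        (le_of_lt (by have := gammaA_pos hβ0 k; positivity)))
    (fun k => ?_) (key_summable hβ hz)
  have hG := gammaA_pos hβ0 k
  have : c k * z ^ k ≤ ((k:ℝ)+β)^2 * z ^ k :=
    mul_le_mul_of_nonneg_right (hle k) (pow_nonneg hz k)
  exact div_le_div_of_nonneg_right this (by positivity) |>.trans_eq rfl

lemma wright_summable {β z : ℝ} (hβ : 1 ≤ β) (hz : 0 ≤ z) :
    Summable (fun k : ℕ => z ^ k / (k.factorial * Real.Gamma ((k : ℝ) + β))) := by
  have := cmp_summable hβ hz (fun _ => 1) (fun _ => zero_le_one)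
    (fun k => by show (1:ℝ) ≤ _; nlinarith [Nat.cast_nonneg (α := ℝ) k])
  simpa using this

lemma lin_summable {β z : ℝ} (hβ : 1 ≤ β) (hz : 0 ≤ z) :
    Summable (fun k : ℕ => (k:ℝ) * z ^ k / (k.factorial * Real.Gamma ((k : ℝ) + β))) :=
  cmp_summable hβ hz (fun k => (k:ℝ)) (fun k => Nat.cast_nonneg k)
    (fun k => by show (k:ℝ) ≤ _; nlinarith [Nat.cast_nonneg (α := ℝ) k])

lemma quad_summable {β z : ℝ} (hβ : 1 ≤ β) (hz : 0 ≤ z) :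
    Summable (fun k : ℕ => (k:ℝ) * ((k:ℝ)-1) * z ^ k / (k.factorial * Real.Gamma ((k : ℝ) + β))) := by
  apply cmp_summable hβ hz (fun k => (k:ℝ) * ((k:ℝ)-1)) (fun k => ?_) (fun k => ?_)
  · show (0:ℝ) ≤ (k:ℝ) * ((k:ℝ)-1)
    rcases Nat.eq_zero_or_pos k with h | h
    · simp [h]
    · have : (1:ℝ) ≤ (k:ℝ) := by exact_mod_cast h
      nlinarith
  · show (k:ℝ) * ((k:ℝ)-1) ≤ _
    nlinarith [Nat.cast_nonneg (α := ℝ) k]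

/-- Shift identity for the linear weight. -/
lemma shift_lin {β z : ℝ} (hβ : 1 ≤ β) (hz : 0 ≤ z) :
    ∑' k : ℕ, (k:ℝ) * z ^ k / (k.factorial * Real.Gamma ((k : ℝ) + β)) = z * wright (β+1) z := by
  have hβ0 : (0:ℝ) < β := lt_of_lt_of_le one_pos hβ
  rw [Summable.tsum_eq_zero_add (lin_summable hβ hz)]
  have h0 : ((0:ℕ):ℝ) * z ^ (0:ℕ) / ((0:ℕ).factorial * Real.Gamma (((0:ℕ):ℝ) + β)) = 0 := by simp
  rw [h0, zero_add]
  have hterm : ∀ k : ℕ, ((k+1:ℕ):ℝ) * z ^ (k+1) / ((k+1:ℕ).factorial * Real.Gamma (((k+1:ℕ):ℝ) + β))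
      = z * (z ^ k / (k.factorial * Real.Gamma ((k:ℝ) + (β+1)))) := by
    intro k
    have hG : Real.Gamma (((k+1 : ℕ):ℝ) + β) = Real.Gamma ((k:ℝ) + (β+1)) := by
      push_cast; ring_nf
    have hfac' : ((k+1 : ℕ).factorial : ℝ) = ((k:ℝ)+1) * k.factorial := by
      push_cast [Nat.factorial_succ]; ring
    rw [hG, hfac']
    have hG' : 0 < Real.Gamma ((k:ℝ) + (β+1)) := Real.Gamma_pos_of_pos (by positivity)
    have hfac : (0:ℝ) < k.factorial := by positivity
    have hk1 : ((k:ℝ)+1) ≠ 0 := by positivity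
    push_cast
    field_simp
    ring
  rw [tsum_congr hterm, tsum_mul_left, wright]

/-- Shift identity for the quadratic weight. -/
lemma shift_quad {β z : ℝ} (hβ : 1 ≤ β) (hz : 0 ≤ z) :
    ∑' k : ℕ, (k:ℝ) * ((k:ℝ)-1) * z ^ k / (k.factorial * Real.Gamma ((k : ℝ) + β))
      = z ^ 2 * wright (β+2) z := by
  have hβ0 : (0:ℝ) < β := lt_of_lt_of_le one_pos hβ
  rw [Summable.tsum_eq_zero_add (quad_summable hβ hz)]
  have h0 : ((0:ℕ):ℝ) * (((0:ℕ):ℝ)-1) * z ^ (0:ℕ) / ((0:ℕ).factorial * Real.Gamma (((0:ℕ):ℝ) + β)) = 0 := by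
    simp
  rw [h0, zero_add]
  have hterm : ∀ k : ℕ,
      ((k+1:ℕ):ℝ) * (((k+1:ℕ):ℝ)-1) * z ^ (k+1) / ((k+1:ℕ).factorial * Real.Gamma (((k+1:ℕ):ℝ) + β))
      = z * ((k:ℝ) * z ^ k / (k.factorial * Real.Gamma ((k:ℝ) + (β+1)))) := by
    intro k
    have hG : Real.Gamma (((k+1 : ℕ):ℝ) + β) = Real.Gamma ((k:ℝ) + (β+1)) := by
      push_cast; ring_nf
    have hfac' : ((k+1 : ℕ).factorial : ℝ) = ((k:ℝ)+1) * k.factorial := by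
      push_cast [Nat.factorial_succ]; ring
    rw [hG, hfac']
    have hG' : 0 < Real.Gamma ((k:ℝ) + (β+1)) := Real.Gamma_pos_of_pos (by positivity)
    have hfac : (0:ℝ) < k.factorial := by positivity
    have hk1 : ((k:ℝ)+1) ≠ 0 := by positivity
    push_cast
    field_simp
    ring
  rw [tsum_congr hterm, tsum_mul_left, shift_lin (by linarith : (1:ℝ) ≤ β+1) hz]
  rw [show β + 1 + 1 = β + 2 by ring]
  ring

lemma wright_pos {β z : ℝ} (hβ : 1 ≤ β) (hz : 0 ≤ z) : 0 < wright β z := by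
  have hβ0 : (0:ℝ) < β := lt_of_lt_of_le one_pos hβ
  have h0 : 0 < z ^ (0:ℕ) / ((0:ℕ).factorial * Real.Gamma (((0:ℕ):ℝ) + β)) := by
    simp only [pow_zero, Nat.factorial_zero, Nat.cast_one, Nat.cast_zero, zero_add, one_mul]
    exact div_pos one_pos (Real.Gamma_pos_of_pos hβ0)
  exact Summable.tsum_pos (wright_summable hβ hz)
    (fun k => div_nonneg (pow_nonneg hz k) (le_of_lt (by have := gammaA_pos hβ0 k; positivity)))
    0 h0

theorem stmt_7 (β : ℝ) (hβ : 1 < β) (n : ℕ) (hn : 1 ≤ n) (x : ℝ) (hx : 0 ≤ x) :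
    W β n (fun t => t ^ 2) x
      = x ^ 2 * wright (β + 2) (n * x) / wright β (n * x)
        + (1 + 2 * β) * (x / n) * wright (β + 1) (n * x) / wright β (n * x)
        + β ^ 2 / n ^ 2 := by
  have hβ1 : (1:ℝ) ≤ β := le_of_lt hβ
  have hn0 : (0:ℝ) < n := by exact_mod_cast hn
  have hz : (0:ℝ) ≤ (n:ℝ) * x := by positivity
  have hβ0 : (0:ℝ) < β := by linarith
  set z : ℝ := (n:ℝ) * x with hzdef
  have hterm : ∀ k : ℕ,
      (fun t : ℝ => t ^ 2) (((k:ℝ) + β) / n) * z ^ k / (k.factorial * Real.Gamma ((k:ℝ) + β))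
      = (1/(n:ℝ)^2) * ((k:ℝ) * ((k:ℝ)-1) * z ^ k / (k.factorial * Real.Gamma ((k:ℝ) + β)))
        + ((1+2*β)/(n:ℝ)^2) * ((k:ℝ) * z ^ k / (k.factorial * Real.Gamma ((k:ℝ) + β)))
        + (β^2/(n:ℝ)^2) * (z ^ k / (k.factorial * Real.Gamma ((k:ℝ) + β))) := by
    intro k
    have hG := gammaA_pos hβ0 k
    have hfac : (0:ℝ) < k.factorial := by positivity
    simp only []
    field_simp
    ring
  have hs1 := (quad_summable hβ1 hz).mul_left (1/(n:ℝ)^2)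
  have hs2 := (lin_summable hβ1 hz).mul_left ((1+2*β)/(n:ℝ)^2)
  have hs3 := (wright_summable hβ1 hz).mul_left (β^2/(n:ℝ)^2)
  have hsum : ∑' k : ℕ,
      (fun t : ℝ => t ^ 2) (((k:ℝ) + β) / n) * z ^ k / (k.factorial * Real.Gamma ((k:ℝ) + β))
      = (1/(n:ℝ)^2) * (z^2 * wright (β+2) z)
        + ((1+2*β)/(n:ℝ)^2) * (z * wright (β+1) z)
        + (β^2/(n:ℝ)^2) * wright β z := by
    rw [tsum_congr hterm, Summable.tsum_add (hs1.add hs2) hs3, Summable.tsum_add hs1 hs2,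
      tsum_mul_left, tsum_mul_left, tsum_mul_left,
      shift_quad hβ1 hz, shift_lin hβ1 hz]
    rfl
  have hw : wright β z ≠ 0 := ne_of_gt (wright_pos hβ1 hz)
  rw [W, ← hzdef, hsum]
  have hne : (n:ℝ) ≠ 0 := ne_of_gt hn0
  field_simp [hzdef]
  ring
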